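/- Let Σ̂ be symmetric, Z symmetric, λ > 0, and set Y = (1/λ)Σ̂ − Z. Then Θ = (1/2)(−Y + √(YᵀY + (4/λ)I)) is symmetric positive definite and satisfies the stationarity equation −Θ^{-1} + Σ̂ + λ(Θ − Z) = 0. -/

import Mathlib

/-!
With `c = 4 / λ`, the matrix `Θ` is the image of the symmetric matrix `Y` under the functional
calculus for `θ(t) = (√(t² + c) - t) / 2`, the positive root of `θ² + tθ = c / 4`, because
`√(Y² + c) = f(Y)` for `f(t) = √(t² + c)`. Hence `Θ` is positive definite and
`Θ (Y + Θ) = λ⁻¹`, so `Θ⁻¹ = λ (Y + Θ)`; with `λ Y = Σ̂ - λ Z` the stationarity equation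
follows.
-/

open scoped Matrix

/-- The square root of a positive semidefinite matrix, as `Matrix.PosSemidef.sqrt` was defined
in the older Mathlib (removed since). -/
noncomputable def Matrix.PosSemidef.sqrt {n : Type*} [Fintype n] [DecidableEq n]
    {A : Matrix n n ℝ} (hA : A.PosSemidef) : Matrix n n ℝ :=
  hA.1.eigenvectorUnitary.1 * Matrix.diagonal ((↑) ∘ (√·) ∘ hA.1.eigenvalues) *
    (star hA.1.eigenvectorUnitary : Matrix n n ℝ)

lemma Real.sqrt_sub_div_two_mul_add {c : ℝ} (hc : 0 ≤ c) (t : ℝ) :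
    (√(t ^ 2 + c) - t) / 2 * (t + (√(t ^ 2 + c) - t) / 2) = c / 4 := by
  linear_combination sq_sqrt (add_nonneg (sq_nonneg t) hc) / 4

lemma Real.sqrt_sub_div_two_pos {c : ℝ} (hc : 0 < c) (t : ℝ) :
    0 < (√(t ^ 2 + c) - t) / 2 := by
  have : |t| < √(t ^ 2 + c) := by
    rw [← sqrt_sq_eq_abs]
    exact sqrt_lt_sqrt (sq_nonneg t) (lt_add_of_pos_right _ hc)
  linarith [le_abs_self t]

namespace CFC

variable {A : Type*} [Ring A] [StarRing A] [TopologicalSpace A] [Algebra ℝ A]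
  [ContinuousFunctionalCalculus ℝ A IsSelfAdjoint]

lemma cfc_sqrt_sub_div_two_mul_add {y : A} (hy : IsSelfAdjoint y) {c : ℝ} (hc : 0 ≤ c) :
    cfc (fun t => (√(t ^ 2 + c) - t) / 2) y * (y + cfc (fun t => (√(t ^ 2 + c) - t) / 2) y) =
      algebraMap ℝ A (c / 4) := by
  have hadd : y + cfc (fun t => (√(t ^ 2 + c) - t) / 2) y =
      cfc (fun t => t + (√(t ^ 2 + c) - t) / 2) y := by
    rw [cfc_add .., cfc_id' ℝ y]
  rw [hadd, ← cfc_mul .., ← cfc_const (c / 4) y]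
  exact cfc_congr fun t _ => Real.sqrt_sub_div_two_mul_add hc t

variable [PartialOrder A] [StarOrderedRing A] [NonnegSpectrumClass ℝ A]

lemma isStrictlyPositive_cfc_sqrt_sub_div_two {y : A} (hy : IsSelfAdjoint y) {c : ℝ}
    (hc : 0 < c) :
    IsStrictlyPositive (cfc (fun t => (√(t ^ 2 + c) - t) / 2) y) :=
  (cfc_isStrictlyPositive_iff _ y).mpr fun t _ => Real.sqrt_sub_div_two_pos hc t

variable [IsSemitopologicalRing A] [T2Space A]

lemma sqrt_mul_self_add_algebraMap {y : A} (hy : IsSelfAdjoint y) {c : ℝ} (hc : 0 ≤ c) :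
    sqrt (y * y + algebraMap ℝ A c) = cfc (fun t => √(t ^ 2 + c)) y := by
  refine sqrt_unique ?_ (cfc_nonneg fun t _ => Real.sqrt_nonneg _)
  rw [← cfc_mul .., ← sq y, ← cfc_pow_id (R := ℝ) y 2, ← cfc_add_const ..]
  exact cfc_congr fun t _ => Real.mul_self_sqrt (add_nonneg (sq_nonneg t) hc)

lemma half_smul_neg_add_sqrt_eq_cfc {y : A} (hy : IsSelfAdjoint y) {c : ℝ} (hc : 0 ≤ c) :
    (1 / 2 : ℝ) • (-y + sqrt (y * y + algebraMap ℝ A c)) =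
      cfc (fun t => (√(t ^ 2 + c) - t) / 2) y := by
  rw [sqrt_mul_self_add_algebraMap hy hc, ← cfc_neg_id (R := ℝ) y, ← cfc_add ..,
    ← cfc_smul ..]
  exact cfc_congr fun t _ => by simp only [smul_eq_mul]; ring

end CFC

open scoped MatrixOrder in
lemma Matrix.PosSemidef.sqrt_eq_cfcSqrt {n : Type*} [Fintype n] [DecidableEq n]
    {A : Matrix n n ℝ} (hA : A.PosSemidef) : hA.sqrt = CFC.sqrt A := by
  rw [CFC.sqrt_eq_cfc, cfc_nnreal_eq_real _ _ hA.nonneg, hA.1.cfc_eq]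
  simp [Matrix.IsHermitian.cfc, Matrix.PosSemidef.sqrt, Function.comp_def,
    fun i => max_eq_left (hA.eigenvalues_nonneg i)]

theorem stmt_12 {d : ℕ} (S Z : Matrix (Fin d) (Fin d) ℝ) (lam : ℝ) (hlam : 0 < lam)
    (hS : S.IsHermitian) (hZ : Z.IsHermitian)
    (Y : Matrix (Fin d) (Fin d) ℝ) (hY : Y = (1 / lam) • S - Z)
    (hP : (Yᵀ * Y + (4 / lam) • (1 : Matrix (Fin d) (Fin d) ℝ)).PosSemidef)
    (Θ : Matrix (Fin d) (Fin d) ℝ) (hΘ : Θ = (1 / 2 : ℝ) • (-Y + hP.sqrt)) :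
    Θ.IsHermitian ∧ Θ.PosDef ∧ -Θ⁻¹ + S + lam • (Θ - Z) = 0 := by
  open scoped MatrixOrder in
  have hYh : IsSelfAdjoint Y := hY ▸ (hS.smul (.all (1 / lam))).sub hZ
  have hYt : Yᵀ = Y := hYh
  have hc : 0 < 4 / lam := by positivity
  have hΘ_cfc : Θ = cfc (fun t => (√(t ^ 2 + 4 / lam) - t) / 2) Y := by
    rw [hΘ, hP.sqrt_eq_cfcSqrt, hYt, ← Algebra.algebraMap_eq_smul_one,
      CFC.half_smul_neg_add_sqrt_eq_cfc hYh hc.le]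
  have hΘpd : Θ.PosDef :=
    hΘ_cfc ▸ Matrix.isStrictlyPositive_iff_posDef.mp
      (CFC.isStrictlyPositive_cfc_sqrt_sub_div_two hYh hc)
  have hinv : Θ⁻¹ = lam • (Y + Θ) := by
    refine Matrix.inv_eq_right_inv ?_
    rw [mul_smul_comm, hΘ_cfc, CFC.cfc_sqrt_sub_div_two_mul_add hYh hc.le,
      Algebra.algebraMap_eq_smul_one, smul_smul,
      show lam * (4 / lam / 4) = 1 by field_simp, one_smul]
  refine ⟨hΘpd.isHermitian, hΘpd, ?_⟩
  rw [hinv, hY]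
  match_scalars <;> field_simp <;> ring
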